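/- Fix integers 2 ≤ ℓ < k. For every 0 < α < 1/(12k²) there exists, for each sufficiently large n, a k-graph H on n vertices with minimum ℓ-degree δ_ℓ(H) ≥ α·C(n, k-ℓ) such that for every c > ℓ/⌊1/(4αk)⌋, if p < n^{-(k-ℓ)-c} then with high probability the randomly perturbed k-graph H_p^+ does not contain a Hamilton ℓ-cycle. -/

import Mathlib

open MeasureTheory Filter
open scoped ENNReal

/-- The Bernoulli measure on `Bool` with success probability `p` (truncated at 1). -/
noncomputable def bern (p : ℝ≥0∞) : Measure Bool :=
  (PMF.bernoulli (min p 1).toNNReal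
    (by simpa using ENNReal.toNNReal_mono ENNReal.one_ne_top (min_le_right p 1))).toMeasure

/-- The binomial random `k`-graph `H^{(k)}_{n,p}`. -/
noncomputable def randomHypergraph (n k : ℕ) (p : ℝ≥0∞) :
    Measure ({s : Finset (Fin n) // s.card = k} → Bool) :=
  Measure.pi fun _ => bern p

/-- The edge set of the outcome `ω` of the random `k`-graph. -/
def edgeSet {n k : ℕ} (ω : {s : Finset (Fin n) // s.card = k} → Bool) :
    Finset (Finset (Fin n)) :=
  (Finset.univ.filter (fun s : {s : Finset (Fin n) // s.card = k} => ω s = true)).image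
    Subtype.val

/-- `G` contains a Hamilton `ℓ`-cycle: there is a cyclic ordering `v` of the `n`
vertices such that each of the `n/(k-ℓ)` intervals of `k` consecutive vertices
(starting at the multiples of `k-ℓ`, taken cyclically) is an edge of `G`. -/
def HasHamiltonCycle (k ℓ n : ℕ) (G : Finset (Finset (Fin n))) : Prop :=
  (k - ℓ) ∣ n ∧
  ∃ v : ℕ → Fin n, Set.InjOn v (Finset.range n) ∧
    (Finset.range n).image v = Finset.univ ∧
    ∀ j < n / (k - ℓ),
      (Finset.range k).image (fun i => v ((j * (k - ℓ) + i) % n)) ∈ G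

/-!
Let `d = k - ℓ` and let `H` consist of all `k`-sets meeting a hub `A` of `⌈2αn/d⌉` vertices.
An `ℓ`-set `S` lies in at least `|A \ S| · C(n - |A ∪ S|, d - 1) ≥ α C(n, d)` edges of `H`.
The `n/d` edges of a Hamilton `ℓ`-cycle occupy the arcs `[jd, jd + k)` of a cyclic ordering and
every position lies in at most `k/d + 1` of them, so at least `m = n/d - |A| (k/d + 1)` edges of
the cycle avoid `A` and are distinct edges of the random graph. A union bound over the `n!`
orderings bounds the probability by `n! p^m ≤ n^(n - (d + c) m) ≤ 1/n`, as
`c > ℓ/⌊1/(4αk)⌋ ≥ 8αk`.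
-/

open Finset
open scoped Nat

namespace CyclicArc

lemma mul_lt_of_lt_div {n d j : ℕ} (hd : 0 < d) (hj : j < n / d) : j * d < n := by
  have := (Nat.lt_div_iff_mul_lt hd).1 hj
  omega

/-- An arc of length `0 < k < n` determines its starting point: if `x` lies at offset `i > 0`
of the arc from `y`, then the point before `x` is at offset `i - 1` of both arcs, which forces
`n ∣ i' + 1` for some `i' < k`. -/
lemma start_eq_of_arc_eq {n k x y : ℕ} (hk : 0 < k) (hkn : k < n) (hx : x < n) (hy : y < n)
    (hxy : ∀ i < k, ∃ i' < k, (x + i) % n = (y + i') % n)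
    (hyx : ∀ i < k, ∃ i' < k, (y + i) % n = (x + i') % n) : x = y := by
  obtain ⟨i, hi, hxi⟩ := hxy 0 hk
  rcases Nat.eq_zero_or_pos i with rfl | hi0
  · simpa [Nat.mod_eq_of_lt hx, Nat.mod_eq_of_lt hy] using hxi
  obtain ⟨i', hi', hyi'⟩ := hyx (i - 1) (by omega)
  have : (x + 0) % n = (x + (i' + 1)) % n := by
    rw [hxi, show y + i = y + (i - 1) + 1 by omega, Nat.add_mod, hyi', ← Nat.add_mod,
      Nat.add_assoc]
  have := Nat.ModEq.add_left_cancel' x this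
  rw [Nat.ModEq, Nat.zero_mod, Nat.mod_eq_of_lt (by omega)] at this
  omega

/-- The positions, in a cyclic ordering, of the `j`-th edge of a Hamilton cycle whose consecutive
edges start `d` positions apart. -/
def arc (n : ℕ) [NeZero n] (d k j : ℕ) : Finset (Fin n) :=
  (range k).image fun i => Fin.ofNat n (j * d + i)

variable {n : ℕ} [NeZero n] {d k : ℕ}

lemma mem_arc {j : ℕ} {x : Fin n} : x ∈ arc n d k j ↔ ∃ i < k, (j * d + i) % n = x := by
  simp [arc, Fin.ext_iff]

lemma card_arc (hkn : k ≤ n) (j : ℕ) : #(arc n d k j) = k := by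
  rw [arc, card_image_of_injOn, card_range]
  intro i hi i' hi' h
  simp only [coe_range, Set.mem_Iio] at hi hi'
  have := Nat.ModEq.add_left_cancel' (j * d) (congrArg Fin.val h : _)
  rwa [Nat.ModEq, Nat.mod_eq_of_lt (by omega), Nat.mod_eq_of_lt (by omega)] at this

lemma arc_injOn (hd : 0 < d) (hk : 0 < k) (hkn : k < n) :
    Set.InjOn (arc n d k) (range (n / d)) := by
  intro j hj j' hj' h
  simp only [coe_range, Set.mem_Iio] at hj hj'
  have covers : ∀ {a b : ℕ}, arc n d k a = arc n d k b →
      ∀ i < k, ∃ i' < k, (a * d + i) % n = (b * d + i') % n := by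
    intro a b hab i hi
    have : Fin.ofNat n (a * d + i) ∈ arc n d k b := hab ▸ mem_image_of_mem _ (mem_range.2 hi)
    obtain ⟨i', hi', h'⟩ := mem_arc.1 this
    exact ⟨i', hi', by rw [h', Fin.val_ofNat]⟩
  exact Nat.eq_of_mul_eq_mul_right hd <| start_eq_of_arc_eq hk hkn (mul_lt_of_lt_div hd hj)
    (mul_lt_of_lt_div hd hj') (covers h) (covers h.symm)

/-- A point `z` lies in the arc `j` at the offset `(z + (n - jd)) % n`; offsets are
`≡ z (mod d)` when `d ∣ n`, and there are at most `k / d + 1` such offsets below `k`. -/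
lemma card_filter_mem_arc_le (hd : 0 < d) (hdn : d ∣ n) (hkn : k ≤ n) (z : Fin n) :
    #{j ∈ range (n / d) | z ∈ arc n d k j} ≤ k / d + 1 := by
  have offset : ∀ j ∈ {j ∈ range (n / d) | z ∈ arc n d k j}, ∃ i < k,
      (j * d + i) % n = z ∧ (z + (n - j * d)) % n = i := by
    intro j hj
    simp only [mem_filter, mem_range, mem_arc] at hj
    obtain ⟨hj, i, hi, hz⟩ := hj
    have := mul_lt_of_lt_div hd hj
    refine ⟨i, hi, hz, ?_⟩
    rw [← hz, Nat.mod_add_mod, show j * d + i + (n - j * d) = i + n by omega, Nat.add_mod_right,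
      Nat.mod_eq_of_lt (by omega)]
  calc #{j ∈ range (n / d) | z ∈ arc n d k j}
      ≤ #{i ∈ range k | i ≡ z [MOD d]} := by
        refine card_le_card_of_injOn (fun j => (z + (n - j * d)) % n) ?_ ?_
        · intro j hj
          obtain ⟨i, hi, hz, hi'⟩ := offset j hj
          simp only [mem_coe, mem_filter, mem_range, hi']
          refine ⟨hi, ?_⟩
          rw [← hz, Nat.ModEq, Nat.mod_mod_of_dvd _ hdn, Nat.mul_comm, Nat.mul_add_mod]
        · intro j hj j' hj' h
          obtain ⟨i, -, hz, hi⟩ := offset j hj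
          obtain ⟨i', -, hz', hi'⟩ := offset j' hj'
          simp only [mem_coe, mem_filter, mem_range] at hj hj'
          have hii : i = i' := hi.symm.trans (h.trans hi')
          subst hii
          have := Nat.ModEq.add_right_cancel' i (hz.trans hz'.symm)
          rw [Nat.ModEq, Nat.mod_eq_of_lt (mul_lt_of_lt_div hd hj.1),
            Nat.mod_eq_of_lt (mul_lt_of_lt_div hd hj'.1)] at this
          exact Nat.eq_of_mul_eq_mul_right hd this
    _ = k / d + if (z : ℕ) % d < k % d then 1 else 0 := by
        rw [← Nat.count_eq_card_filter_range, Nat.count_modEq_card _ hd]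
    _ ≤ k / d + 1 := by gcongr; split_ifs <;> omega

end CyclicArc

open CyclicArc

lemma HasHamiltonCycle.exists_perm {k ℓ n : ℕ} [NeZero n] {G : Finset (Finset (Fin n))}
    (h : HasHamiltonCycle k ℓ n G) :
    ∃ σ : Equiv.Perm (Fin n), ∀ j < n / (k - ℓ), (arc n (k - ℓ) k j).image σ ∈ G := by
  obtain ⟨-, v, hinj, -, hG⟩ := h
  have hv : Function.Injective fun x : Fin n => v x := fun x y hxy =>
    Fin.ext (hinj (by simp) (by simp) hxy)
  refine ⟨Equiv.ofBijective _ (Finite.injective_iff_bijective.1 hv), fun j hj => ?_⟩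
  convert hG j hj using 1
  simp [arc, image_image, Function.comp_def]

instance (p : ℝ≥0∞) : IsProbabilityMeasure (bern p) :=
  PMF.toMeasure.isProbabilityMeasure _

lemma bern_singleton_true (p : ℝ≥0∞) : bern p {true} = min p 1 := by
  rw [bern, PMF.toMeasure_apply_singleton _ _ (measurableSet_singleton _)]
  exact ENNReal.coe_toNNReal (ne_top_of_le_ne_top ENNReal.one_ne_top (min_le_right p 1))

lemma randomHypergraph_forall_mem (n k : ℕ) (p : ℝ≥0∞)
    (T : Finset {s : Finset (Fin n) // #s = k}) :
    randomHypergraph n k p {ω | ∀ s ∈ T, ω s = true} = min p 1 ^ #T := by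
  have : {ω : {s : Finset (Fin n) // #s = k} → Bool | ∀ s ∈ T, ω s = true} =
      (T : Set _).pi fun _ => {true} := by
    ext; simp [Set.mem_pi]
  rw [randomHypergraph, this, Measure.pi_pi_finset, prod_const, bern_singleton_true]

/-- Union bound over the `n!` cyclic orderings; for each ordering, the images of the arcs that are
not edges of `H` are at least `m` distinct `k`-sets. -/
lemma randomHypergraph_hasHamiltonCycle_le {k ℓ n m : ℕ} [NeZero n] (hd : 0 < k - ℓ)
    (hk : 0 < k) (hkn : k < n) (H : Finset (Finset (Fin n))) (p : ℝ≥0∞)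
    (hm : ∀ σ : Equiv.Perm (Fin n),
      m ≤ #{j ∈ range (n / (k - ℓ)) | (arc n (k - ℓ) k j).image σ ∉ H}) :
    randomHypergraph n k p {ω | HasHamiltonCycle k ℓ n (H ∪ edgeSet ω)} ≤
      n ! * min p 1 ^ m := by
  set d := k - ℓ
  let window (σ : Equiv.Perm (Fin n)) (j : ℕ) := (arc n d k j).image σ
  let forced (σ : Equiv.Perm (Fin n)) : Finset {s : Finset (Fin n) // #s = k} :=
    ({j ∈ range (n / d) | window σ j ∉ H}.image (window σ)).subtype fun s => #s = k
  have hcover : {ω | HasHamiltonCycle k ℓ n (H ∪ edgeSet ω)} ⊆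
      ⋃ σ, {ω | ∀ s ∈ forced σ, ω s = true} := by
    intro ω hω
    obtain ⟨σ, hσ⟩ := hω.exists_perm
    refine Set.mem_iUnion.2 ⟨σ, fun s hs => ?_⟩
    simp only [forced, mem_subtype, mem_image, mem_filter, mem_range] at hs
    obtain ⟨j, ⟨hj, hjH⟩, hjs⟩ := hs
    obtain ⟨t, ht, hts⟩ := mem_image.1 ((mem_union.1 (hσ j hj)).resolve_left hjH)
    rw [show s = t from Subtype.ext (hjs.symm.trans hts.symm)]
    exact (mem_filter.1 ht).2
  have hforced : ∀ σ, m ≤ #(forced σ) := by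
    intro σ
    have hcard : ∀ j, #(window σ j) = k := fun j =>
      (card_image_of_injective _ σ.injective).trans (card_arc hkn.le j)
    have hk_sets :
        ∀ s ∈ {j ∈ range (n / d) | window σ j ∉ H}.image (window σ), #s = k := by
      simp only [mem_image]
      rintro _ ⟨j, -, rfl⟩
      exact hcard j
    rw [card_subtype, filter_true_of_mem hk_sets, card_image_of_injOn]
    · exact hm σ
    · intro j hj j' hj' h
      exact arc_injOn hd hk hkn (mem_filter.1 hj).1 (mem_filter.1 hj').1
        (image_injective σ.injective h)
  calc randomHypergraph n k p {ω | HasHamiltonCycle k ℓ n (H ∪ edgeSet ω)}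
      ≤ randomHypergraph n k p (⋃ σ, {ω | ∀ s ∈ forced σ, ω s = true}) :=
        measure_mono hcover
    _ ≤ ∑ σ, randomHypergraph n k p {ω | ∀ s ∈ forced σ, ω s = true} :=
        measure_iUnion_fintype_le _ _
    _ ≤ ∑ _σ : Equiv.Perm (Fin n), min p 1 ^ m := by
        gcongr with σ
        rw [randomHypergraph_forall_mem]
        exact pow_le_pow_right_of_le_one' (min_le_right _ _) (hforced σ)
    _ = n ! * min p 1 ^ m := by simp [Fintype.card_perm]

lemma factorial_mul_min_pow_le_inv {n m : ℕ} {p e : ℝ} (hn : 0 < n) (hp : p ≤ (n : ℝ) ^ e)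
    (he : n + e * m ≤ -1) :
    (n ! : ℝ≥0∞) * min (ENNReal.ofReal p) 1 ^ m ≤ (n : ℝ≥0∞)⁻¹ := by
  have hnR : (0 : ℝ) < n := by exact_mod_cast hn
  calc (n ! : ℝ≥0∞) * min (ENNReal.ofReal p) 1 ^ m
      ≤ ENNReal.ofReal ((n : ℝ) ^ n) * ENNReal.ofReal ((n : ℝ) ^ e) ^ m := by
        gcongr
        · rw [← Nat.cast_pow, ENNReal.ofReal_natCast]
          exact_mod_cast Nat.factorial_le_pow n
        · exact (min_le_left _ _).trans (ENNReal.ofReal_le_ofReal hp)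
    _ = ENNReal.ofReal ((n : ℝ) ^ (n + e * m : ℝ)) := by
        rw [← ENNReal.ofReal_pow (by positivity), ← ENNReal.ofReal_mul (by positivity),
          Real.rpow_add hnR, Real.rpow_mul hnR.le, Real.rpow_natCast, Real.rpow_natCast]
    _ ≤ ENNReal.ofReal ((n : ℝ) ^ (-1 : ℝ)) :=
        ENNReal.ofReal_le_ofReal (Real.rpow_le_rpow_of_exponent_le (by exact_mod_cast hn) he)
    _ = (n : ℝ≥0∞)⁻¹ := by
        rw [Real.rpow_neg_one, ENNReal.ofReal_inv_of_pos hnR, ENNReal.ofReal_natCast]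

def meetGraph {V : Type*} [Fintype V] [DecidableEq V] (k : ℕ) (A : Finset V) :
    Finset (Finset V) :=
  {e ∈ powersetCard k univ | ¬Disjoint A e}

lemma card_of_mem_meetGraph {V : Type*} [Fintype V] [DecidableEq V] {k : ℕ} {A e : Finset V}
    (he : e ∈ meetGraph k A) : #e = k :=
  (mem_powersetCard.1 (mem_filter.1 he).1).2

lemma sub_le_card_filter_image_arc_not_mem_meetGraph {n d k : ℕ} [NeZero n] (hd : 0 < d)
    (hdn : d ∣ n) (hkn : k ≤ n) (A : Finset (Fin n)) (σ : Equiv.Perm (Fin n)) :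
    n / d - #A * (k / d + 1) ≤
      #{j ∈ range (n / d) | (arc n d k j).image σ ∉ meetGraph k A} := by
  have hmeet :
      #{j ∈ range (n / d) | ¬Disjoint A ((arc n d k j).image σ)} ≤ #A * (k / d + 1) :=
    calc #{j ∈ range (n / d) | ¬Disjoint A ((arc n d k j).image σ)}
        ≤ #(A.biUnion fun z => {j ∈ range (n / d) | σ.symm z ∈ arc n d k j}) := by
          refine card_le_card fun j hj => ?_
          obtain ⟨hj, z, hzA, hz⟩ := by simpa [not_disjoint_iff] using hj
          simp only [mem_biUnion, mem_filter, mem_range]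
          exact ⟨σ z, hzA, hj, by simpa using hz⟩
      _ ≤ ∑ z ∈ A, #{j ∈ range (n / d) | σ.symm z ∈ arc n d k j} := card_biUnion_le
      _ ≤ ∑ _z ∈ A, (k / d + 1) := sum_le_sum fun z _ => card_filter_mem_arc_le hd hdn hkn _
      _ = #A * (k / d + 1) := by rw [sum_const, smul_eq_mul]
  have hsplit := card_filter_add_card_filter_not (s := range (n / d))
    (p := fun j => ¬Disjoint A ((arc n d k j).image σ))
  have hsub : {j ∈ range (n / d) | ¬¬Disjoint A ((arc n d k j).image σ)} ⊆
      {j ∈ range (n / d) | (arc n d k j).image σ ∉ meetGraph k A} :=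
    fun j => by
      simp only [mem_filter, meetGraph, not_not]
      exact fun ⟨hj, hdisj⟩ => ⟨hj, fun h => h.2 hdisj⟩
  have := card_le_card hsub
  rw [card_range] at hsplit
  omega

lemma randomHypergraph_hasHamiltonCycle_meetGraph_le {k ℓ n a : ℕ} [NeZero n] (hd : 0 < k - ℓ)
    (hk : 0 < k) (hkn : k < n) (hdn : k - ℓ ∣ n) (han : a ≤ n) {p e : ℝ}
    (hp : p ≤ (n : ℝ) ^ e)
    (he : n + e * ((n / (k - ℓ) - a * (k / (k - ℓ) + 1) : ℕ) : ℝ) ≤ -1) :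
    randomHypergraph n k (ENNReal.ofReal p)
      {ω | HasHamiltonCycle k ℓ n (meetGraph k {x : Fin n | (x : ℕ) < a} ∪ edgeSet ω)} ≤
      (n : ℝ≥0∞)⁻¹ := by
  have hA : #({x | (x : ℕ) < a} : Finset (Fin n)) = a := by
    rw [Fin.card_filter_val_lt, min_eq_right han]
  refine (randomHypergraph_hasHamiltonCycle_le hd hk hkn _ _ fun σ => ?_).trans
    (factorial_mul_min_pow_le_inv (NeZero.pos n) hp he)
  have := sub_le_card_filter_image_arc_not_mem_meetGraph hd hdn hkn.le
    ({x | (x : ℕ) < a} : Finset (Fin n)) σ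
  rwa [hA] at this

/-- Injection `(x, T) ↦ {x} ∪ S ∪ T` with `x ∈ A \ S` and `T` a set of `k - #S - 1` vertices
outside `A ∪ S`; both `x` and `T` are recovered from the image. -/
lemma card_mul_choose_le_card_meetGraph_superset {V : Type*} [Fintype V] [DecidableEq V]
    {k : ℕ} (A S : Finset V) (hk : #S < k) :
    #(A \ S) * Nat.choose #(univ \ (A ∪ S)) (k - #S - 1) ≤
      #{e ∈ meetGraph k A | S ⊆ e} := by
  have hT : ∀ {x : V} {T : Finset V}, x ∈ A → T ⊆ univ \ (A ∪ S) →
      insert x (S ∪ T) \ (A ∪ S) = T := by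
    intro x T hx hTsub
    ext y
    have := @hTsub y
    simp only [Finset.mem_sdiff, mem_insert, mem_union, mem_univ, true_and] at this ⊢
    constructor
    · rintro ⟨rfl | hy | hy, hyAS⟩ <;> tauto
    · intro hy; tauto
  rw [← card_powersetCard, ← card_product]
  refine card_le_card_of_injOn (fun q => insert q.1 (S ∪ q.2)) ?_ ?_
  · rintro ⟨x, T⟩ hq
    simp only [coe_product, Set.mem_prod, mem_coe, Finset.mem_sdiff, mem_powersetCard] at hq
    obtain ⟨⟨hxA, hxS⟩, hTsub, hTcard⟩ := hq
    have hTA : ∀ y ∈ T, y ∉ A ∧ y ∉ S := fun y hy => by simpa using hTsub hy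
    simp only [meetGraph, coe_filter, mem_filter, mem_powersetCard, subset_univ, true_and]
    refine ⟨⟨?_, not_disjoint_iff.2 ⟨x, hxA, mem_insert_self _ _⟩⟩,
      fun y hy => mem_insert_of_mem (mem_union_left _ hy)⟩
    rw [card_insert_of_notMem, card_union_of_disjoint, hTcard]
    · omega
    · exact disjoint_left.2 fun y hyS hyT => (hTA y hyT).2 hyS
    · simp only [mem_union, not_or]
      exact ⟨hxS, fun hxT => (hTA x hxT).1 hxA⟩
  · rintro ⟨x, T⟩ hq ⟨x', T'⟩ hq' h
    simp only [coe_product, Set.mem_prod, mem_coe, Finset.mem_sdiff, mem_powersetCard]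
      at hq hq' h
    obtain rfl : T = T' := by rw [← hT hq.1.1 hq.2.1, ← hT hq'.1.1 hq'.2.1, h]
    have hx : x ∈ insert x' (S ∪ T) := h ▸ mem_insert_self x (S ∪ T)
    have hxT : x ∉ T := fun hxT => by simpa [hq.1.1] using hq.2.1 hxT
    simp only [mem_insert, mem_union, hq.1.2, hxT, or_false] at hx
    rw [hx]

/-- `C(M, r) ≤ M^r / r!` and `C(M - b, r) ≥ (M - D)^r / r!` with `D = b + r - 1`, while
Bernoulli's inequality gives `(1 - D/M)^r ≥ 1 - rD/M ≥ 2/3`. -/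
lemma two_mul_choose_le_three_mul_choose_sub {M b r : ℕ} (h : 3 * (r * (b + r)) ≤ M) :
    2 * (M.choose r : ℝ) ≤ 3 * (M - b).choose r := by
  rcases Nat.eq_zero_or_pos r with rfl | hr
  · norm_num
  set D := b + r - 1
  have hDM : D < M := by
    have : b + r ≤ r * (b + r) := Nat.le_mul_of_pos_left _ hr
    omega
  have hM : (0 : ℝ) < M := by exact_mod_cast (Nat.zero_le D).trans_lt hDM
  have hrD : 3 * (r * (D : ℝ)) ≤ M := by
    have : 3 * (r * D) ≤ M := le_trans (by gcongr; omega) h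
    exact_mod_cast this
  have hbern := one_add_mul_le_pow (a := -(D / M : ℝ))
    (neg_le_neg <| (div_le_one_of_le₀ (by exact_mod_cast hDM.le) hM.le).trans one_le_two) r
  have hpow : 2 * (M : ℝ) ^ r ≤ 3 * ((M - D : ℕ) : ℝ) ^ r := by
    have hMD : ((M - D : ℕ) : ℝ) = M * (1 + -(D / M : ℝ)) := by
      rw [Nat.cast_sub hDM.le]; field_simp; ring
    have : (r : ℝ) * (D / M) ≤ 1 / 3 := by
      rw [mul_div_assoc', div_le_div_iff₀ hM (by norm_num)]; linarith
    rw [hMD, mul_pow]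
    nlinarith [pow_pos hM r]
  have hfac : (0 : ℝ) < r ! := by exact_mod_cast r.factorial_pos
  calc 2 * (M.choose r : ℝ) ≤ 2 * ((M : ℝ) ^ r / r !) := by
        gcongr; exact Nat.choose_le_pow_div r M
    _ ≤ 3 * (((M - D : ℕ) : ℝ) ^ r / r !) := by
        rw [← mul_div_assoc, ← mul_div_assoc]; gcongr
    _ ≤ 3 * (M - b).choose r := by
        rw [show M - D = M - b + 1 - r by omega]; gcongr; exact Nat.pow_le_choose r _

lemma mul_choose_le_mul_choose_sub {n d ℓ a : ℕ} {α : ℝ} (hα : 0 ≤ α) (hd : 0 < d)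
    (ha : 2 * α * n ≤ a * d) (hℓ : 2 * (ℓ * d) ≤ α * n)
    (hn : 3 * (d * (a + ℓ + d)) ≤ n) :
    α * n.choose d ≤ (a - ℓ : ℕ) * (n - a - ℓ).choose (d - 1) := by
  obtain ⟨r, rfl⟩ : ∃ r, d = r + 1 := ⟨d - 1, by omega⟩
  rcases n with _ | n
  · simp only [Nat.choose_zero_succ, Nat.cast_zero, mul_zero]; positivity
  have hpascal : ((n + 1 : ℕ) : ℝ) * n.choose r = (n + 1).choose (r + 1) * (r + 1) := by
    exact_mod_cast Nat.add_one_mul_choose_eq n r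
  have hcmp : 2 * (n.choose r : ℝ) ≤ 3 * (n + 1 - a - ℓ).choose r := by
    have h3 : 3 * (r * (a + ℓ + r)) ≤ n + 1 := le_trans (by gcongr <;> omega) hn
    have := two_mul_choose_le_three_mul_choose_sub h3
    rw [Nat.sub_sub]
    exact le_trans (by gcongr; omega) this
  have hd' : (0 : ℝ) < r + 1 := by positivity
  have hℓa : ℓ ≤ a := by
    have : (ℓ : ℝ) * (r + 1) ≤ a * (r + 1) := by push_cast at ha hℓ; nlinarith
    exact_mod_cast le_of_mul_le_mul_right this hd'
  have hcoef : 3 * (α * (n + 1 : ℕ)) ≤ 2 * (((a - ℓ : ℕ) : ℝ) * (r + 1)) := by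
    rw [Nat.cast_sub hℓa]; push_cast at ha hℓ ⊢; nlinarith
  refine le_of_mul_le_mul_right ?_ hd'
  calc α * (n + 1).choose (r + 1) * (r + 1) = α * (n + 1 : ℕ) * n.choose r := by
        rw [mul_assoc, ← hpascal]; ring
    _ ≤ α * (n + 1 : ℕ) * (3 / 2 * (n + 1 - a - ℓ).choose r) := by
        gcongr; linarith
    _ ≤ (a - ℓ : ℕ) * (n + 1 - a - ℓ).choose (r + 1 - 1) * (r + 1) := by
        rw [Nat.add_sub_cancel]
        nlinarith [(Nat.cast_nonneg _ : (0 : ℝ) ≤ (n + 1 - a - ℓ).choose r)]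

lemma le_ceil_div_mul_and_le {x d : ℝ} (hx : 0 ≤ x) (hd : 0 < d) :
    x ≤ ⌈x / d⌉₊ * d ∧ ⌈x / d⌉₊ * d ≤ x + d := by
  constructor
  · rw [← div_le_iff₀ hd]; exact Nat.le_ceil _
  · have := (Nat.ceil_lt_add_one (div_nonneg hx hd.le)).le
    rwa [← le_div_iff₀ hd, add_div, div_self hd.ne']

lemma mul_le_div_floor_one_div {x : ℝ} (hx : 0 < x) (hx1 : x ≤ 1) (y : ℝ) (hy : 0 ≤ y) :
    y * x ≤ y / ⌊1 / x⌋₊ := by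
  have hfloor : (1 : ℝ) ≤ ⌊1 / x⌋₊ := by
    exact_mod_cast Nat.floor_pos.2 (by rwa [le_div_iff₀ hx, one_mul])
  calc y * x = y / (1 / x) := by field_simp
    _ ≤ y / ⌊1 / x⌋₊ :=
        div_le_div_of_nonneg_left hy (by linarith) (Nat.floor_le (by positivity))

lemma two_mul_hub_le {k d a n α : ℝ} (hk : 1 ≤ k) (hd : 1 ≤ d) (hα0 : 0 < α)
    (hα : α * (12 * k ^ 2) < 1) (hn : 2 * k ^ 2 ≤ α * n) (ha : a * d ≤ 2 * α * n + d) :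
    2 * k * a ≤ n := by
  have hn0 : 0 ≤ n :=
    nonneg_of_mul_nonneg_right ((by positivity : (0 : ℝ) ≤ 2 * k ^ 2).trans hn) hα0
  have ha' : a ≤ 2 * α * n + 1 := by nlinarith
  have hαk : α * (12 * k) ≤ 1 := by nlinarith
  nlinarith [mul_le_mul_of_nonneg_right hαk hn0]

lemma three_mul_hub_le {k ℓ d a n α : ℝ} (hk : 1 ≤ k) (hℓ : 0 ≤ ℓ) (hdk : d + ℓ = k)
    (hα0 : 0 < α) (hα : α * (12 * k ^ 2) < 1) (hn : 2 * k ^ 2 ≤ α * n)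
    (ha : a * d ≤ 2 * α * n + d) :
    3 * (d * (a + ℓ + d)) ≤ n := by
  have hn0 : 0 ≤ n :=
    nonneg_of_mul_nonneg_right ((by positivity : (0 : ℝ) ≤ 2 * k ^ 2).trans hn) hα0
  have hαn : 0 ≤ α * n := by positivity
  have hsplit : d * (a + ℓ + d) = a * d + d * k := by rw [← hdk]; ring
  have hdk' : d * k ≤ k ^ 2 := by nlinarith
  have h1 : 12 * (α * n) ≤ n := by
    nlinarith [mul_le_mul_of_nonneg_right hα.le hn0,
      mul_le_mul_of_nonneg_left (one_le_pow₀ hk : 1 ≤ k ^ 2) hαn]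
  have h2 : 12 * k ^ 2 ≤ n := by nlinarith
  nlinarith

/-- Since `d m = n - Y`, the left side is `Y - c m`, and `c ≥ 8αk` makes `c m ≈ 8αkn / d` exceed
`Y ≤ 2ka ≈ 4αkn / d`. -/
lemma add_mul_le_neg_one {k d a n m Y α c : ℝ} (hk : 3 ≤ k) (hd : 1 ≤ d) (hdk : d ≤ k)
    (hα : α * (12 * k ^ 2) < 1) (hn : 2 * k ^ 2 ≤ α * n)
    (ha : a * d ≤ 2 * α * n + d) (hc : 8 * α * k ≤ c) (hm : d * m + Y = n) (hm0 : 0 ≤ m)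
    (hY0 : 0 ≤ Y) (hY : Y ≤ 2 * k * a) :
    n + (-d - c) * m ≤ -1 := by
  have hdY : d * Y ≤ 4 * k * (α * n) + 2 * k * d := by nlinarith
  have ha' : a ≤ 2 * α * n + 1 := by nlinarith
  have hcY : 8 * α * k * Y ≤ 3 * (α * n) + 2 * k := by nlinarith
  have hc' : 8 * α * k * (d * m) ≤ c * (d * m) := mul_le_mul_of_nonneg_right hc (by positivity)
  have hαn : (4 * k - 3) * (2 * k ^ 2) ≤ (4 * k - 3) * (α * n) :=
    mul_le_mul_of_nonneg_left hn (by linarith)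
  have hkd : k * d ≤ k ^ 2 := by nlinarith
  have hαkm : α * k * (d * m) = α * k * n - α * k * Y := by rw [← hm]; ring
  have : d * (Y + 1) ≤ d * (c * m) := by nlinarith
  have : Y + 1 ≤ c * m := le_of_mul_le_mul_left this (by linarith)
  nlinarith

/-- The hub size `2αn / (k - ℓ)`: an `ℓ`-set lies in about
`|A| (k - ℓ) / n · C(n, k - ℓ) = 2α C(n, k - ℓ)` edges meeting the hub, while a Hamilton
`ℓ`-cycle has at most `|A| (k / (k - ℓ) + 1) ≲ 4αkn / (k - ℓ)²` of them. -/
noncomputable def extremalGraph (k ℓ : ℕ) (α : ℝ) (n : ℕ) : Finset (Finset (Fin n)) :=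
  meetGraph k {x : Fin n | (x : ℕ) < ⌈2 * α * n / (k - ℓ : ℕ)⌉₊}

section extremalGraph

variable {k ℓ n : ℕ} {α : ℝ}

lemma le_card_extremalGraph_superset (hℓk : ℓ < k) (hα0 : 0 < α) (hα : α * (12 * k ^ 2) < 1)
    (hn : 2 * k ^ 2 ≤ α * n) (S : Finset (Fin n)) (hS : #S = ℓ) :
    α * n.choose (k - ℓ) ≤ #{e ∈ extremalGraph k ℓ α n | S ⊆ e} := by
  set d := k - ℓ
  set a := ⌈2 * α * n / d⌉₊
  have hd : 0 < d := by omega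
  have hk : (1 : ℝ) ≤ k := by exact_mod_cast (by omega : 1 ≤ k)
  have hdR : (1 : ℝ) ≤ d := by exact_mod_cast hd
  obtain ⟨ha, ha'⟩ :=
    le_ceil_div_mul_and_le (by positivity : 0 ≤ 2 * α * n) (by positivity : (0 : ℝ) < d)
  have han : a ≤ n := by
    have := two_mul_hub_le hk hdR hα0 hα hn ha'
    exact_mod_cast (show (a : ℝ) ≤ n by nlinarith)
  set A : Finset (Fin n) := {x | (x : ℕ) < a}
  have hA : #A = a := by rw [Fin.card_filter_val_lt, min_eq_right han]
  have hAS : a - ℓ ≤ #(A \ S) := by have := le_card_sdiff S A; omega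
  have hAS' : n - a - ℓ ≤ #(univ \ (A ∪ S)) := by
    rw [card_sdiff_of_subset (subset_univ _), card_univ, Fintype.card_fin]
    have := card_union_le A S
    omega
  have hℓ : 2 * ((ℓ : ℝ) * d) ≤ α * n := by
    have : ℓ * d ≤ k ^ 2 := by rw [sq]; exact Nat.mul_le_mul (by omega) (by omega)
    have : ((ℓ * d : ℕ) : ℝ) ≤ ((k ^ 2 : ℕ) : ℝ) := by exact_mod_cast this
    push_cast at this; linarith
  have hsmall : 3 * (d * (a + ℓ + d)) ≤ n := by
    have hdℓ : (d : ℝ) + ℓ = k := by exact_mod_cast (show d + ℓ = k by omega)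
    have := three_mul_hub_le hk (Nat.cast_nonneg ℓ) hdℓ hα0 hα hn ha'
    exact_mod_cast this
  calc α * n.choose d ≤ (a - ℓ : ℕ) * (n - a - ℓ).choose (d - 1) :=
        mul_choose_le_mul_choose_sub hα0.le hd ha hℓ hsmall
    _ ≤ #(A \ S) * Nat.choose #(univ \ (A ∪ S)) (k - #S - 1) := by
        rw [hS]; exact_mod_cast Nat.mul_le_mul hAS (Nat.choose_le_choose _ hAS')
    _ ≤ #{e ∈ extremalGraph k ℓ α n | S ⊆ e} := by
        exact_mod_cast card_mul_choose_le_card_meetGraph_superset A S (hS ▸ hℓk)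

lemma forced_exponent_le_neg_one (hℓ : 2 ≤ ℓ) (hℓk : ℓ < k) (hdn : k - ℓ ∣ n)
    (hα0 : 0 < α) (hα : α * (12 * k ^ 2) < 1) (hn : 2 * k ^ 2 ≤ α * n) {a : ℕ}
    (ha : (a : ℝ) * (k - ℓ : ℕ) ≤ 2 * α * n + (k - ℓ : ℕ)) {c : ℝ} (hc : 8 * α * k ≤ c) :
    (n : ℝ) + (-((k - ℓ : ℕ) : ℝ) - c) *
      ((n / (k - ℓ) - a * (k / (k - ℓ) + 1) : ℕ) : ℝ) ≤ -1 := by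
  set d := k - ℓ
  set q := k / d + 1
  have hd : 0 < d := by omega
  have hk : (3 : ℝ) ≤ k := by exact_mod_cast (by omega : 3 ≤ k)
  have hdR : (1 : ℝ) ≤ d := by exact_mod_cast hd
  have hdk : (d : ℝ) ≤ k := by exact_mod_cast (by omega : d ≤ k)
  have hqd : q * d ≤ 2 * k := by
    have := Nat.div_mul_le_self k d
    rw [add_mul, one_mul]; omega
  have hY : a * q * d ≤ 2 * k * a :=
    calc a * q * d = a * (q * d) := mul_assoc _ _ _
      _ ≤ a * (2 * k) := Nat.mul_le_mul_left _ hqd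
      _ = 2 * k * a := mul_comm _ _
  have haqd : a * q * d ≤ n := by
    have : ((2 * k * a : ℕ) : ℝ) ≤ n := by
      push_cast; exact two_mul_hub_le (by linarith) hdR hα0 hα hn ha
    exact hY.trans (by exact_mod_cast this)
  have hm : d * (n / d - a * q) + a * q * d = n := by
    rw [mul_comm (a * q) d, ← Nat.mul_add,
      Nat.sub_add_cancel ((Nat.le_div_iff_mul_le hd).2 haqd), Nat.mul_div_cancel' hdn]
  exact add_mul_le_neg_one hk hdR hdk hα hn ha hc (Y := ((a * q * d : ℕ) : ℝ))
    (by exact_mod_cast hm) (by positivity) (by positivity) (by exact_mod_cast hY)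

lemma randomHypergraph_extremalGraph_le (hℓ : 2 ≤ ℓ) (hℓk : ℓ < k) (hα0 : 0 < α)
    (hα : α * (12 * k ^ 2) < 1) (hn : 2 * k ^ 2 ≤ α * n) {c p : ℝ} (hc : 8 * α * k ≤ c)
    (hp : p ≤ (n : ℝ) ^ (-((k : ℝ) - ℓ) - c)) :
    randomHypergraph n k (ENNReal.ofReal p)
      {ω | HasHamiltonCycle k ℓ n (extremalGraph k ℓ α n ∪ edgeSet ω)} ≤
      (n : ℝ≥0∞)⁻¹ := by
  rw [← Nat.cast_sub hℓk.le] at hp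
  set d := k - ℓ
  set a := ⌈2 * α * n / d⌉₊
  have hd : 0 < d := by omega
  have hk : (1 : ℝ) ≤ k := by exact_mod_cast (by omega : 1 ≤ k)
  have hdR : (1 : ℝ) ≤ d := by exact_mod_cast hd
  have ha' := (le_ceil_div_mul_and_le (by positivity : 0 ≤ 2 * α * n)
    (by positivity : (0 : ℝ) < d)).2
  have hka := two_mul_hub_le hk hdR hα0 hα hn ha'
  have ha1 : (1 : ℝ) ≤ a := by
    exact_mod_cast Nat.ceil_pos.2 (div_pos (by nlinarith) (by positivity))
  have hkn : k < n := by exact_mod_cast (show (k : ℝ) < n by nlinarith)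
  have : NeZero n := ⟨by omega⟩
  by_cases hdn : d ∣ n
  · exact randomHypergraph_hasHamiltonCycle_meetGraph_le hd (by omega) hkn hdn
      (by exact_mod_cast (show (a : ℝ) ≤ n by nlinarith)) hp
      (forced_exponent_le_neg_one hℓ hℓk hdn hα0 hα hn ha' hc)
  · have : {ω : {s : Finset (Fin n) // #s = k} → Bool |
        HasHamiltonCycle k ℓ n (extremalGraph k ℓ α n ∪ edgeSet ω)} = ∅ :=
      Set.eq_empty_of_forall_notMem fun ω h => hdn h.1
    simp [this]

end extremalGraph

/-- Optimality of the main theorem. Fix `2 ≤ ℓ < k`. For every `0 < α < 1/(12k²)`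
there exists (for each sufficiently large `n`) a `k`-graph `H` on `n` vertices
with minimum `ℓ`-degree `δ_ℓ(H) ≥ α·C(n, k-ℓ)` such that for every
`c > ℓ/⌊1/(4αk)⌋`, if `p < n^{-(k-ℓ)-c}` then with high probability the randomly
perturbed `k`-graph `H⁺_p` contains no Hamilton `ℓ`-cycle. -/
theorem perturbed_optimality (k ℓ : ℕ) (hℓ : 2 ≤ ℓ) (hℓk : ℓ < k)
    (α : ℝ) (hα0 : 0 < α) (hα1 : α < 1 / (12 * (k : ℝ) ^ 2)) :
    ∃ N : ℕ, ∃ H : (n : ℕ) → Finset (Finset (Fin n)),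
      (∀ n ≥ N,
        (∀ e ∈ H n, e.card = k) ∧
        (∀ S : Finset (Fin n), S.card = ℓ →
          α * ((n.choose (k - ℓ) : ℝ)) ≤ (((H n).filter (fun e => S ⊆ e)).card : ℝ))) ∧
      ∀ c : ℝ, c > (ℓ : ℝ) / (⌊1 / (4 * α * (k : ℝ))⌋₊ : ℝ) →
        ∀ p : ℕ → ℝ, (∀ n : ℕ, 1 ≤ n → 0 ≤ p n ∧
            p n < (n : ℝ) ^ (-((k : ℝ) - (ℓ : ℝ)) - c)) →
          Tendsto (fun n =>
              randomHypergraph n k (ENNReal.ofReal (p n))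
                {ω | HasHamiltonCycle k ℓ n (H n ∪ edgeSet ω)})
            atTop (nhds 0) := by
  have hk : (0 : ℝ) < k := by exact_mod_cast (by omega : 0 < k)
  have hα : α * (12 * k ^ 2) < 1 := by rwa [lt_div_iff₀ (by positivity)] at hα1
  set N := ⌈2 * (k : ℝ) ^ 2 / α⌉₊
  have hlarge : ∀ n ≥ N, 2 * (k : ℝ) ^ 2 ≤ α * n := fun n hn => by
    have := Nat.ceil_le.1 hn
    rw [div_le_iff₀ hα0] at this
    linarith
  refine ⟨N, extremalGraph k ℓ α, fun n hn => ⟨fun e he => card_of_mem_meetGraph he,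
    le_card_extremalGraph_superset hℓk hα0 hα (hlarge n hn)⟩, fun c hc p hp => ?_⟩
  have hc' : 8 * α * k ≤ c := by
    have hαk : 0 < 4 * α * k := by positivity
    have hℓR : (2 : ℝ) ≤ ℓ := by exact_mod_cast hℓ
    have hk1 : (1 : ℝ) ≤ k := by exact_mod_cast (by omega : 1 ≤ k)
    have h4 : 4 * α * k ≤ 1 := by nlinarith
    calc 8 * α * k ≤ ℓ * (4 * α * k) := by nlinarith
      _ ≤ ℓ / ⌊1 / (4 * α * k)⌋₊ := mul_le_div_floor_one_div hαk h4 _ (by positivity)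
      _ ≤ c := hc.le
  refine tendsto_of_tendsto_of_tendsto_of_le_of_le' tendsto_const_nhds
    ENNReal.tendsto_inv_nat_nhds_zero (Eventually.of_forall fun n => zero_le) ?_
  filter_upwards [eventually_ge_atTop (max 1 N)] with n hn
  exact randomHypergraph_extremalGraph_le hℓ hℓk hα0 hα (hlarge n (le_of_max_le_right hn)) hc'
    (hp n (le_of_max_le_left hn)).2.le
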